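/- arXiv:2605.10350 — 8 statements merged into one kernel-verified Lean document; each statement's English description precedes it below -/
import Mathlib

section
/- Let D₁, D₂, D₃ > 0, D₄ ≥ 0, P₁ > 0 and κ² > 0 be fixed reals. Then the normalized noise function of the balanced coherent optical detection scheme, W(P_l) = D₁·P₁/(P_l(P_l+P₁)) + D₂·(P_l+P₁)/(κ²·P_l·P₁) + D₃/(κ²·P_l·P₁) + D₄, is strictly decreasing on (0, ∞); consequently, for any P_l^max > 0, on the interval (0, P_l^max] the function W attains its minimum exactly at P_l = P_l^max. -/
open Set

/-- Normalized noise of the BCOD scheme: user-signal-dependent shot noise,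
direct-current shot noise, thermal noise, and a constant term. -/
noncomputable def Wbcod (D1 D2 D3 D4 P1 κsq Pl : ℝ) : ℝ :=
  D1 * P1 / (Pl * (Pl + P1)) + D2 * (Pl + P1) / (κsq * Pl * P1)
    + D3 / (κsq * Pl * P1) + D4

theorem bcod_noise_strictAnti_and_boundary_min
    (D1 D2 D3 D4 P1 κsq : ℝ)
    (hD1 : 0 < D1) (hD2 : 0 < D2) (hD3 : 0 < D3) (hD4 : 0 ≤ D4)
    (hP1 : 0 < P1) (hκ : 0 < κsq) :
    StrictAntiOn (Wbcod D1 D2 D3 D4 P1 κsq) (Ioi 0) ∧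
    ∀ Plmax : ℝ, 0 < Plmax →
      ∀ x ∈ Ioc (0 : ℝ) Plmax, x ≠ Plmax →
        Wbcod D1 D2 D3 D4 P1 κsq Plmax < Wbcod D1 D2 D3 D4 P1 κsq x := by
  have key : StrictAntiOn (Wbcod D1 D2 D3 D4 P1 κsq) (Ioi 0) := by
    intro a ha b hb hab
    simp only [mem_Ioi] at ha hb
    unfold Wbcod
    have h1 : D1 * P1 / (b * (b + P1)) < D1 * P1 / (a * (a + P1)) := by
      apply div_lt_div_of_pos_left (by positivity) (by positivity)
      nlinarith
    have h2 : D2 * (b + P1) / (κsq * b * P1) < D2 * (a + P1) / (κsq * a * P1) := by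
      rw [div_lt_div_iff₀ (by positivity) (by positivity)]
      nlinarith [mul_pos (mul_pos (mul_pos hD2 hκ) (mul_pos hP1 hP1)) (sub_pos.mpr hab)]
    have h3 : D3 / (κsq * b * P1) < D3 / (κsq * a * P1) := by
      apply div_lt_div_of_pos_left hD3 (by positivity)
      nlinarith [mul_pos (mul_pos hκ hP1) (sub_pos.mpr hab)]
    linarith
  refine ⟨key, ?_⟩
  intro Plmax hPlmax x hx hne
  exact key (mem_Ioi.mpr hx.1) (mem_Ioi.mpr hPlmax) (lt_of_le_of_ne hx.2 hne)
end

section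
/- Fix P₀ > 0 and P_c > 0. Then the function P_LO ↦ ln P₁(P_LO) has, at every P_LO > 0, derivative equal to −(X₀·a₃₄/X₁²)·(2a₁₂²P₀² + 2a₁₂P₀a₂₃P_c), which is strictly negative; consequently P_LO ↦ P₁(P_LO) is strictly decreasing on (0, ∞). -/
open Set

/-- `X₁ = 2a₁₂²P₀² + 2a₁₂P₀(a₃₄P_LO + a₂₃P_c) + γ₂²a₃₄P_LO`. -/
noncomputable def X1fun (a12 a23 a34 γ2 P0 Pc PLO : ℝ) : ℝ :=
  2 * a12 ^ 2 * P0 ^ 2 + 2 * a12 * P0 * (a34 * PLO + a23 * Pc) + γ2 ^ 2 * a34 * PLO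

/-- Transmitted probe power `P₁ = P₀·exp(−X₀a₃₄P_LO/X₁)` at zero detuning. -/
noncomputable def P1fun (a12 a23 a34 γ2 X0 P0 Pc PLO : ℝ) : ℝ :=
  P0 * Real.exp (-(X0 * a34 * PLO) / X1fun a12 a23 a34 γ2 P0 Pc PLO)

/-!
`X₁` is affine in `P_LO`, with constant term `A = 2a₁₂²P₀² + 2a₁₂P₀a₂₃P_c > 0` and slope
`B = X₂a₃₄ ≥ 0`, and `ln P₁ = ln P₀ − X₀a₃₄P_LO / X₁`. The quotient rule gives
`d/dP_LO (P_LO / (A + B·P_LO)) = A / (A + B·P_LO)²`, so `ln P₁` has derivative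
`−X₀a₃₄A / X₁² < 0`; hence `ln P₁`, and with it `P₁`, is strictly decreasing.
-/

open Real

theorem hasDerivAt_neg_mul_div_affine (c A B p : ℝ) (hp : A + B * p ≠ 0) :
    HasDerivAt (fun q => -(c * q) / (A + B * q)) (-(c / (A + B * p) ^ 2) * A) p := by
  have hnum : HasDerivAt (fun q => -(c * q)) (-c) p := by
    simpa using ((hasDerivAt_id p).const_mul c).fun_neg
  have hden : HasDerivAt (fun q => A + B * q) B p := by
    simpa using ((hasDerivAt_id p).const_mul B).const_add A
  refine (hnum.div hden hp).congr_deriv ?_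
  field_simp
  ring

theorem strictAntiOn_Ioi_of_hasDerivAt_neg {f f' : ℝ → ℝ} {a : ℝ}
    (hf : ∀ x ∈ Ioi a, HasDerivAt f (f' x) x) (hf' : ∀ x ∈ Ioi a, f' x < 0) :
    StrictAntiOn f (Ioi a) := by
  refine strictAntiOn_of_deriv_neg (convex_Ioi a)
    (fun x hx => (hf x hx).continuousAt.continuousWithinAt) fun x hx => ?_
  rw [interior_Ioi] at hx
  rw [(hf x hx).deriv]
  exact hf' x hx

theorem StrictAntiOn.of_log {f : ℝ → ℝ} {s : Set ℝ} (hf : ∀ x ∈ s, 0 < f x)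
    (h : StrictAntiOn (fun x => log (f x)) s) : StrictAntiOn f s :=
  fun x hx y hy hxy => (log_lt_log_iff (hf y hy) (hf x hx)).1 (h hx hy hxy)

section ProbePower

variable {a12 a23 a34 γ2 X0 P0 Pc : ℝ}

theorem X1fun_eq_affine (a12 a23 a34 γ2 P0 Pc p : ℝ) :
    X1fun a12 a23 a34 γ2 P0 Pc p =
      (2 * a12 ^ 2 * P0 ^ 2 + 2 * a12 * P0 * a23 * Pc) + (2 * a12 * P0 + γ2 ^ 2) * a34 * p := by
  unfold X1fun
  ring

theorem X1fun_pos (ha12 : 0 < a12) (ha23 : 0 < a23) (ha34 : 0 < a34) (hP0 : 0 < P0)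
    (hPc : 0 < Pc) {p : ℝ} (hp : 0 ≤ p) : 0 < X1fun a12 a23 a34 γ2 P0 Pc p := by
  rw [X1fun_eq_affine]
  positivity

theorem P1fun_pos (hP0 : 0 < P0) (p : ℝ) : 0 < P1fun a12 a23 a34 γ2 X0 P0 Pc p := by
  unfold P1fun
  positivity

theorem log_P1fun (hP0 : 0 < P0) (p : ℝ) :
    log (P1fun a12 a23 a34 γ2 X0 P0 Pc p) =
      log P0 + -(X0 * a34 * p) / X1fun a12 a23 a34 γ2 P0 Pc p := by
  rw [P1fun, log_mul hP0.ne' (exp_ne_zero _), log_exp]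

theorem hasDerivAt_log_P1fun (hP0 : 0 < P0) {p : ℝ} (hX1 : X1fun a12 a23 a34 γ2 P0 Pc p ≠ 0) :
    HasDerivAt (fun q => log (P1fun a12 a23 a34 γ2 X0 P0 Pc q))
      (-(X0 * a34 / (X1fun a12 a23 a34 γ2 P0 Pc p) ^ 2)
        * (2 * a12 ^ 2 * P0 ^ 2 + 2 * a12 * P0 * a23 * Pc)) p := by
  simp only [log_P1fun hP0, X1fun_eq_affine] at hX1 ⊢
  exact (hasDerivAt_neg_mul_div_affine _ _ _ p hX1).const_add _

theorem deriv_log_P1fun_neg (ha12 : 0 < a12) (ha23 : 0 < a23) (ha34 : 0 < a34) (hX0 : 0 < X0)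
    (hP0 : 0 < P0) (hPc : 0 < Pc) {p : ℝ} (hp : 0 < p) :
    -(X0 * a34 / (X1fun a12 a23 a34 γ2 P0 Pc p) ^ 2)
      * (2 * a12 ^ 2 * P0 ^ 2 + 2 * a12 * P0 * a23 * Pc) < 0 := by
  have hX1 := X1fun_pos (γ2 := γ2) ha12 ha23 ha34 hP0 hPc hp.le
  refine mul_neg_of_neg_of_pos (neg_neg_of_pos ?_) (by positivity)
  exact div_pos (by positivity) (pow_pos hX1 2)

end ProbePower

theorem logP1_deriv_in_PLO_neg_and_P1_strictAnti_general
    (a12 a23 a34 γ2 X0 : ℝ)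
    (ha12 : 0 < a12) (ha23 : 0 < a23) (ha34 : 0 < a34)
    (hX0 : 0 < X0)
    (P0 Pc : ℝ) (hP0 : 0 < P0) (hPc : 0 < Pc) :
    (∀ PLO : ℝ, 0 < PLO →
      HasDerivAt (fun p => Real.log (P1fun a12 a23 a34 γ2 X0 P0 Pc p))
        (-(X0 * a34 / (X1fun a12 a23 a34 γ2 P0 Pc PLO) ^ 2)
          * (2 * a12 ^ 2 * P0 ^ 2 + 2 * a12 * P0 * a23 * Pc)) PLO ∧
      -(X0 * a34 / (X1fun a12 a23 a34 γ2 P0 Pc PLO) ^ 2)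
          * (2 * a12 ^ 2 * P0 ^ 2 + 2 * a12 * P0 * a23 * Pc) < 0) ∧
    StrictAntiOn (fun PLO => P1fun a12 a23 a34 γ2 X0 P0 Pc PLO) (Ioi 0) := by
  have hderiv (p : ℝ) (hp : 0 < p) :=
    hasDerivAt_log_P1fun (X0 := X0) hP0 (X1fun_pos (γ2 := γ2) ha12 ha23 ha34 hP0 hPc hp.le).ne'
  have hneg (p : ℝ) (hp : 0 < p) := deriv_log_P1fun_neg (γ2 := γ2) ha12 ha23 ha34 hX0 hP0 hPc hp
  refine ⟨fun p hp => ⟨hderiv p hp, hneg p hp⟩, ?_⟩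
  exact StrictAntiOn.of_log (fun p _ => P1fun_pos hP0 p)
    (strictAntiOn_Ioi_of_hasDerivAt_neg hderiv hneg)

theorem logP1_deriv_in_PLO_neg_and_P1_strictAnti
    (a12 a23 a34 γ2 X0 C0 : ℝ)
    (ha12 : 0 < a12) (ha23 : 0 < a23) (ha34 : 0 < a34) (hγ2 : 0 < γ2)
    (hX0 : 0 < X0) (hC0 : 0 < C0)
    (P0 Pc : ℝ) (hP0 : 0 < P0) (hPc : 0 < Pc) :
    (∀ PLO : ℝ, 0 < PLO →
      HasDerivAt (fun p => Real.log (P1fun a12 a23 a34 γ2 X0 P0 Pc p))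
        (-(X0 * a34 / (X1fun a12 a23 a34 γ2 P0 Pc PLO) ^ 2)
          * (2 * a12 ^ 2 * P0 ^ 2 + 2 * a12 * P0 * a23 * Pc)) PLO ∧
      -(X0 * a34 / (X1fun a12 a23 a34 γ2 P0 Pc PLO) ^ 2)
          * (2 * a12 ^ 2 * P0 ^ 2 + 2 * a12 * P0 * a23 * Pc) < 0) ∧
    StrictAntiOn (fun PLO => P1fun a12 a23 a34 γ2 X0 P0 Pc PLO) (Ioi 0) :=
  logP1_deriv_in_PLO_neg_and_P1_strictAnti_general a12 a23 a34 γ2 X0 ha12 ha23 ha34 hX0 P0 Pc hP0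
    hPc
end

section
/- Fix D₁ > 0 and P_l > 0, and define the BCOD user-signal-dependent noise N₁ = D₁·P₁/(P_l(P_l + P₁)) as a function of the transmitted probe power P₁. Then: (i) the map P₁ ↦ D₁·P₁/(P_l(P_l+P₁)) is strictly increasing on (0, ∞), while the corresponding DIOD noise P₁ ↦ D₁/P₁ is strictly decreasing on (0, ∞); consequently, (ii) with P₁ = P₁(P₀, P_c, P_LO) as in the zero-detuning model, the BCOD noise N₁ is strictly decreasing in P_LO and strictly increasing in P_c and in P₀ on (0, ∞), so the BCOD design that minimizes N₁ is opposite to the DIOD design. -/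
open Set

/-- BCOD user-signal-dependent shot noise `N₁ = D₁·P₁/(P_l(P_l+P₁))`
as a function of the transmitted probe power `P₁`. -/
noncomputable def N1bcod (D1 Pl P1 : ℝ) : ℝ := D1 * P1 / (Pl * (Pl + P1))

lemma X1_pos {a12 a23 a34 γ2 P0 Pc PLO : ℝ}
    (ha12 : 0 < a12) (ha23 : 0 < a23) (ha34 : 0 < a34) (hγ2 : 0 < γ2)
    (hP0 : 0 < P0) (hPc : 0 < Pc) (hPLO : 0 < PLO) :
    0 < X1fun a12 a23 a34 γ2 P0 Pc PLO := by
  unfold X1fun; positivity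

lemma P1_pos {a12 a23 a34 γ2 X0 P0 Pc PLO : ℝ} (hP0 : 0 < P0) :
    0 < P1fun a12 a23 a34 γ2 X0 P0 Pc PLO := by
  unfold P1fun; positivity

lemma N1_mono {D1 Pl : ℝ} (hD1 : 0 < D1) (hPl : 0 < Pl) :
    StrictMonoOn (fun P1 => N1bcod D1 Pl P1) (Ioi 0) := by
  intro x hx y hy hxy
  simp only [mem_Ioi] at hx hy
  unfold N1bcod
  rw [div_lt_div_iff₀ (by positivity) (by positivity)]
  nlinarith [mul_pos hD1 hPl, mul_pos (mul_pos hD1 hPl) hPl]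

theorem bcod_signal_dependent_noise_design_opposite_to_diod
    (a12 a23 a34 γ2 X0 C0 : ℝ)
    (ha12 : 0 < a12) (ha23 : 0 < a23) (ha34 : 0 < a34) (hγ2 : 0 < γ2)
    (hX0 : 0 < X0) (hC0 : 0 < C0)
    (D1 Pl : ℝ) (hD1 : 0 < D1) (hPl : 0 < Pl) :
    -- (i) monotonicity in the transmitted probe power P₁
    StrictMonoOn (fun P1 => N1bcod D1 Pl P1) (Ioi 0) ∧
    StrictAntiOn (fun P1 => D1 / P1) (Ioi 0) ∧
    -- (ii) BCOD noise N₁ as a function of the optical/LO powers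
    (∀ P0 Pc : ℝ, 0 < P0 → 0 < Pc →
      StrictAntiOn (fun PLO => N1bcod D1 Pl (P1fun a12 a23 a34 γ2 X0 P0 Pc PLO))
        (Ioi 0)) ∧
    (∀ P0 PLO : ℝ, 0 < P0 → 0 < PLO →
      StrictMonoOn (fun Pc => N1bcod D1 Pl (P1fun a12 a23 a34 γ2 X0 P0 Pc PLO))
        (Ioi 0)) ∧
    (∀ Pc PLO : ℝ, 0 < Pc → 0 < PLO →
      StrictMonoOn (fun P0 => N1bcod D1 Pl (P1fun a12 a23 a34 γ2 X0 P0 Pc PLO))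
        (Ioi 0)) := by
  have hN := N1_mono hD1 hPl
  refine ⟨hN, ?_, ?_, ?_, ?_⟩
  · -- DIOD: strictly decreasing
    intro x hx y hy hxy
    simp only [mem_Ioi] at hx hy
    exact div_lt_div_of_pos_left hD1 hx hxy
  · -- anti in PLO
    intro P0 Pc hP0 hPc x hx y hy hxy
    simp only [mem_Ioi] at hx hy
    have hP1 : P1fun a12 a23 a34 γ2 X0 P0 Pc y < P1fun a12 a23 a34 γ2 X0 P0 Pc x := by
      unfold P1fun
      have hXx := X1_pos ha12 ha23 ha34 hγ2 hP0 hPc hx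
      have hXy := X1_pos ha12 ha23 ha34 hγ2 hP0 hPc hy
      apply mul_lt_mul_of_pos_left _ hP0
      apply Real.exp_lt_exp.mpr
      rw [div_lt_div_iff₀ hXy hXx]
      have key : 0 < X0 * a34 * (y - x) * (2 * a12 ^ 2 * P0 ^ 2 + 2 * a12 * P0 * (a23 * Pc)) := by
        have : 0 < y - x := by linarith
        positivity
      unfold X1fun
      nlinarith [key]
    exact hN (mem_Ioi.mpr (P1_pos hP0)) (mem_Ioi.mpr (P1_pos hP0)) hP1
  · -- mono in Pc
    intro P0 PLO hP0 hPLO x hx y hy hxy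
    simp only [mem_Ioi] at hx hy
    have hP1 : P1fun a12 a23 a34 γ2 X0 P0 x PLO < P1fun a12 a23 a34 γ2 X0 P0 y PLO := by
      unfold P1fun
      have hXx := X1_pos ha12 ha23 ha34 hγ2 hP0 hx hPLO
      have hXy := X1_pos ha12 ha23 ha34 hγ2 hP0 hy hPLO
      have hXlt : X1fun a12 a23 a34 γ2 P0 x PLO < X1fun a12 a23 a34 γ2 P0 y PLO := by
        unfold X1fun
        nlinarith [mul_pos (mul_pos ha12 hP0) (mul_pos ha23 (sub_pos.mpr hxy))]
      apply mul_lt_mul_of_pos_left _ hP0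
      apply Real.exp_lt_exp.mpr
      rw [neg_div, neg_div, neg_lt_neg_iff]
      exact div_lt_div_of_pos_left (by positivity) hXx hXlt
    exact hN (mem_Ioi.mpr (P1_pos hP0)) (mem_Ioi.mpr (P1_pos hP0)) hP1
  · -- mono in P0
    intro Pc PLO hPc hPLO x hx y hy hxy
    simp only [mem_Ioi] at hx hy
    have hP1 : P1fun a12 a23 a34 γ2 X0 x Pc PLO < P1fun a12 a23 a34 γ2 X0 y Pc PLO := by
      unfold P1fun
      have hXx := X1_pos ha12 ha23 ha34 hγ2 hx hPc hPLO
      have hXy := X1_pos ha12 ha23 ha34 hγ2 hy hPc hPLO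
      have hXlt : X1fun a12 a23 a34 γ2 x Pc PLO < X1fun a12 a23 a34 γ2 y Pc PLO := by
        unfold X1fun
        nlinarith [mul_pos (mul_pos ha12 (sub_pos.mpr hxy)) (mul_pos ha34 hPLO),
          mul_pos (mul_pos ha12 (sub_pos.mpr hxy)) (mul_pos ha23 hPc),
          mul_pos (mul_pos (mul_pos ha12 ha12) (sub_pos.mpr hxy)) (add_pos hx hy)]
      have hexp : Real.exp (-(X0 * a34 * PLO) / X1fun a12 a23 a34 γ2 x Pc PLO) <
          Real.exp (-(X0 * a34 * PLO) / X1fun a12 a23 a34 γ2 y Pc PLO) := by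
        apply Real.exp_lt_exp.mpr
        rw [neg_div, neg_div, neg_lt_neg_iff]
        exact div_lt_div_of_pos_left (by positivity) hXx hXlt
      exact mul_lt_mul'' hxy hexp hx.le (Real.exp_pos _).le
    exact hN (mem_Ioi.mpr (P1_pos hx)) (mem_Ioi.mpr (P1_pos hy)) hP1
end

section
/- Fix P₀ > 0 and P_LO > 0, and suppose the quantity P_c* = a₃₄P_LO(X₀ + √(X₀² + 16X₂²))/(8a₁₂a₂₃P₀) − a₁₂P₀/a₂₃ is strictly positive. Then the DIOD direct-current-shot-noise objective f(P_c) = P₁(P_c)·κ₁(P_c)², viewed as a function of the coupling power P_c on (0, ∞), has derivative zero at P_c = P_c*; i.e., P_c* is a stationary point of P₁κ₁². -/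
open Set

/-- RF-to-optical slope `κ₁ = C₀·√(a₃₄P_LO)·a₁₂P₀·(a₂₃P_c + a₁₂P₀)/X₁²`. -/
noncomputable def κ1fun (a12 a23 a34 γ2 C0 P0 Pc PLO : ℝ) : ℝ :=
  C0 * Real.sqrt (a34 * PLO) * (a12 * P0) * (a23 * Pc + a12 * P0)
    / (X1fun a12 a23 a34 γ2 P0 Pc PLO) ^ 2

/-- `X₂ = 2a₁₂P₀ + γ₂²`. -/
noncomputable def X2fun (a12 γ2 P0 : ℝ) : ℝ := 2 * a12 * P0 + γ2 ^ 2

theorem diod_dc_shot_noise_stationary_coupling_power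
    (a12 a23 a34 γ2 X0 C0 : ℝ)
    (ha12 : 0 < a12) (ha23 : 0 < a23) (ha34 : 0 < a34) (hγ2 : 0 < γ2)
    (hX0 : 0 < X0) (hC0 : 0 < C0)
    (P0 PLO : ℝ) (hP0 : 0 < P0) (hPLO : 0 < PLO)
    (Pcstar : ℝ)
    (hPcstar : Pcstar =
      a34 * PLO * (X0 + Real.sqrt (X0 ^ 2 + 16 * (X2fun a12 γ2 P0) ^ 2))
        / (8 * a12 * a23 * P0) - a12 * P0 / a23)
    (hpos : 0 < Pcstar) :
    HasDerivAt
      (fun Pc => P1fun a12 a23 a34 γ2 X0 P0 Pc PLO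
        * (κ1fun a12 a23 a34 γ2 C0 P0 Pc PLO) ^ 2)
      0 Pcstar := by
  have hX1pos : 0 < X1fun a12 a23 a34 γ2 P0 Pcstar PLO := by
    unfold X1fun; positivity
  have hX1ne := ne_of_gt hX1pos
  have hX1 : HasDerivAt (fun Pc => X1fun a12 a23 a34 γ2 P0 Pc PLO)
      (2 * a12 * P0 * a23) Pcstar := by
    have h := ((hasDerivAt_id Pcstar).const_mul (2 * a12 * P0 * a23)).const_add
      (2 * a12 ^ 2 * P0 ^ 2 + 2 * a12 * P0 * (a34 * PLO) + γ2 ^ 2 * a34 * PLO)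
    have he : (fun Pc => X1fun a12 a23 a34 γ2 P0 Pc PLO)
        = fun Pc => (2 * a12 ^ 2 * P0 ^ 2 + 2 * a12 * P0 * (a34 * PLO) + γ2 ^ 2 * a34 * PLO)
          + 2 * a12 * P0 * a23 * Pc := by
      funext Pc; unfold X1fun; ring
    rw [he]
    simpa [mul_comm] using h
  have harg : HasDerivAt (fun Pc => -(X0 * a34 * PLO) / X1fun a12 a23 a34 γ2 P0 Pc PLO)
      ((0 * X1fun a12 a23 a34 γ2 P0 Pcstar PLO - (-(X0 * a34 * PLO)) * (2 * a12 * P0 * a23))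
        / (X1fun a12 a23 a34 γ2 P0 Pcstar PLO) ^ 2) Pcstar :=
    (hasDerivAt_const Pcstar (-(X0 * a34 * PLO))).div hX1 hX1ne
  have hP1 := (harg.exp).const_mul P0
  have hnum : HasDerivAt (fun Pc => C0 * Real.sqrt (a34 * PLO) * (a12 * P0) * (a23 * Pc + a12 * P0))
      (C0 * Real.sqrt (a34 * PLO) * (a12 * P0) * a23) Pcstar := by
    have h := (((hasDerivAt_id Pcstar).const_mul a23).add_const (a12 * P0)).const_mul
      (C0 * Real.sqrt (a34 * PLO) * (a12 * P0))
    simpa [mul_comm, mul_assoc] using h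
  have hden := hX1.pow 2
  have hκ := hnum.div hden (pow_ne_zero 2 hX1ne)
  have hκ2 := hκ.pow 2
  have hf := hP1.mul hκ2
  -- key algebraic identity
  have hR2 : Real.sqrt (X0 ^ 2 + 16 * (X2fun a12 γ2 P0) ^ 2) ^ 2
      = X0 ^ 2 + 16 * (X2fun a12 γ2 P0) ^ 2 := Real.sq_sqrt (by positivity)
  have hs : a12 * P0 * (a23 * Pcstar + a12 * P0)
      = a34 * PLO * (X0 + Real.sqrt (X0 ^ 2 + 16 * (X2fun a12 γ2 P0) ^ 2)) / 8 := by
    rw [hPcstar]; field_simp; ring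
  have hkey : (X1fun a12 a23 a34 γ2 P0 Pcstar PLO) ^ 2
      - 4 * (a12 * P0 * (a23 * Pcstar + a12 * P0)) * (X1fun a12 a23 a34 γ2 P0 Pcstar PLO)
      + (a12 * P0 * (a23 * Pcstar + a12 * P0)) * (X0 * (a34 * PLO)) = 0 := by
    have hX1eq : X1fun a12 a23 a34 γ2 P0 Pcstar PLO
        = 2 * (a12 * P0 * (a23 * Pcstar + a12 * P0)) + a34 * PLO * X2fun a12 γ2 P0 := by
      unfold X1fun X2fun; ring
    rw [hX1eq, hs]
    linear_combination (-(a34 * PLO) ^ 2 / 16) * hR2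
  have hS2 : Real.sqrt (a34 * PLO) ^ 2 = a34 * PLO := Real.sq_sqrt (by positivity)
  convert hf using 1
  · rfl
  · rfl
  · rfl
  symm
  trans ((2 * a23 * (a12 * P0) ^ 2 * P0
        * Real.exp (-(X0 * a34 * PLO) / X1fun a12 a23 a34 γ2 P0 Pcstar PLO)
        * C0 ^ 2 * Real.sqrt (a34 * PLO) ^ 2 * (a23 * Pcstar + a12 * P0))
      * ((X1fun a12 a23 a34 γ2 P0 Pcstar PLO) ^ 2
        - 4 * (a12 * P0 * (a23 * Pcstar + a12 * P0)) * (X1fun a12 a23 a34 γ2 P0 Pcstar PLO)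
        + (a12 * P0 * (a23 * Pcstar + a12 * P0)) * (X0 * (a34 * PLO)))
      / (X1fun a12 a23 a34 γ2 P0 Pcstar PLO) ^ 6)
  · simp only [Pi.div_apply, Pi.pow_apply]
    simp only [div_pow, Nat.cast_ofNat]
    field_simp
    ring
  · rw [hkey]
    simp
end

section
/- Fix P₀ > 0 and P_c > 0, set X₃ = X₀² + 4X₀X₂ + 16X₂², and suppose the quantity P_LO* = 2a₁₂P₀(a₂₃P_c + a₁₂P₀)·(√X₃ − X₀ − 2X₂)/(6a₃₄X₂²) is strictly positive. Then the DIOD direct-current-shot-noise objective f(P_LO) = P₁(P_LO)·κ₁(P_LO)², viewed as a function of the local-oscillator power P_LO on (0, ∞), has derivative zero at P_LO = P_LO*; i.e., P_LO* is a stationary point of P₁κ₁². -/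
open Set

/-!
Writing `X₁ = c + m·P` with `c = 2a₁₂P₀(a₂₃P_c + a₁₂P₀)` and `m = X₂a₃₄`, the objective is
`P₀·exp(−KP/(c + mP))·EP/(c + mP)⁴` with `K = X₀a₃₄`. Its logarithmic derivative is
`−Kc/X₁² + 1/P − 4m/X₁`, which vanishes exactly when `c² − 2cmP − 3(mP)² − KcP = 0`.
The positive root of this quadratic in `P` is `P_LO*`, since its discriminant is
`c²a₃₄²X₃`.
-/

open Real

theorem hasDerivAt_mul_exp_div_mul_div_pow_four (P0 K E c m p : ℝ) (hu : c + m * p ≠ 0) :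
    HasDerivAt (fun P => P0 * exp (-(K * P) / (c + m * P)) * (E * P / (c + m * P) ^ 4))
      (P0 * E * exp (-(K * p) / (c + m * p))
        * (c ^ 2 - 2 * c * (m * p) - 3 * (m * p) ^ 2 - K * c * p) / (c + m * p) ^ 6) p := by
  have hX1 : HasDerivAt (fun P => c + m * P) m p := by
    simpa using ((hasDerivAt_id p).const_mul m).const_add c
  have hexponent : HasDerivAt (fun P => -(K * P)) (-K) p := by
    simpa using ((hasDerivAt_id p).const_mul K).fun_neg
  have hlinear : HasDerivAt (fun P => E * P) E p := by
    simpa using (hasDerivAt_id p).const_mul E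
  refine (((hexponent.fun_div hX1 hu).exp.const_mul P0).fun_mul
    (hlinear.fun_div (hX1.fun_pow 4) (pow_ne_zero 4 hu))).congr_deriv ?_
  push_cast
  field_simp
  ring

theorem hasDerivAt_mul_exp_div_mul_div_pow_four_zero (P0 K E c m p : ℝ) (hu : c + m * p ≠ 0)
    (hp : c ^ 2 - 2 * c * (m * p) - 3 * (m * p) ^ 2 - K * c * p = 0) :
    HasDerivAt (fun P => P0 * exp (-(K * P) / (c + m * P)) * (E * P / (c + m * P) ^ 4)) 0 p := by
  simpa [hp] using hasDerivAt_mul_exp_div_mul_div_pow_four P0 K E c m p hu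

theorem stationary_quadratic_eq_zero (c m K S p : ℝ) (hm : m ≠ 0)
    (hS : S ^ 2 = (K + 2 * m) ^ 2 + 12 * m ^ 2)
    (hp : p = c * (S - K - 2 * m) / (6 * m ^ 2)) :
    c ^ 2 - 2 * c * (m * p) - 3 * (m * p) ^ 2 - K * c * p = 0 := by
  subst hp
  field_simp
  linear_combination (-3 * c ^ 2) * hS

theorem X1fun_eq_add_mul (a12 a23 a34 γ2 P0 Pc PLO : ℝ) :
    X1fun a12 a23 a34 γ2 P0 Pc PLO
      = 2 * (a12 * P0) * (a23 * Pc + a12 * P0) + X2fun a12 γ2 P0 * a34 * PLO := by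
  unfold X1fun X2fun
  ring

theorem P1fun_mul_κ1fun_sq (a12 a23 a34 γ2 X0 C0 P0 Pc PLO : ℝ) (hPLO : 0 ≤ a34 * PLO) :
    P1fun a12 a23 a34 γ2 X0 P0 Pc PLO * κ1fun a12 a23 a34 γ2 C0 P0 Pc PLO ^ 2
      = P0 * exp (-(X0 * a34 * PLO)
            / (2 * (a12 * P0) * (a23 * Pc + a12 * P0) + X2fun a12 γ2 P0 * a34 * PLO))
        * (C0 ^ 2 * a34 * (a12 * P0) ^ 2 * (a23 * Pc + a12 * P0) ^ 2 * PLO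
            / (2 * (a12 * P0) * (a23 * Pc + a12 * P0) + X2fun a12 γ2 P0 * a34 * PLO) ^ 4) := by
  unfold P1fun κ1fun
  rw [X1fun_eq_add_mul, div_pow, mul_pow, mul_pow, mul_pow, sq_sqrt hPLO]
  ring

theorem diod_dc_shot_noise_stationary_LO_power_general
    (a12 a23 a34 γ2 X0 C0 : ℝ)
    (ha12 : 0 < a12) (ha23 : 0 < a23) (ha34 : 0 < a34)
    (P0 Pc : ℝ) (hP0 : 0 < P0) (hPc : 0 < Pc)
    (X3 : ℝ)
    (hX3 : X3 = X0 ^ 2 + 4 * X0 * X2fun a12 γ2 P0 + 16 * (X2fun a12 γ2 P0) ^ 2)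
    (PLOstar : ℝ)
    (hPLOstar : PLOstar =
      2 * a12 * P0 * (a23 * Pc + a12 * P0)
        * (Real.sqrt X3 - X0 - 2 * X2fun a12 γ2 P0)
        / (6 * a34 * (X2fun a12 γ2 P0) ^ 2))
    (hpos : 0 < PLOstar) :
    HasDerivAt
      (fun PLO => P1fun a12 a23 a34 γ2 X0 P0 Pc PLO
        * (κ1fun a12 a23 a34 γ2 C0 P0 Pc PLO) ^ 2)
      0 PLOstar := by
  set X2 := X2fun a12 γ2 P0 with hX2_def
  have hX2 : 0 < X2 := by rw [hX2_def, X2fun]; positivity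
  have hX3_nonneg : 0 ≤ X3 := by rw [hX3]; nlinarith [sq_nonneg (X0 + 2 * X2)]
  have hroot := stationary_quadratic_eq_zero (2 * (a12 * P0) * (a23 * Pc + a12 * P0))
    (X2 * a34) (X0 * a34) (a34 * sqrt X3) PLOstar (by positivity)
    (by rw [mul_pow, sq_sqrt hX3_nonneg, hX3]; ring) (by rw [hPLOstar]; field_simp)
  refine (hasDerivAt_mul_exp_div_mul_div_pow_four_zero P0 (X0 * a34)
    (C0 ^ 2 * a34 * (a12 * P0) ^ 2 * (a23 * Pc + a12 * P0) ^ 2) _ _ PLOstar (by positivity)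
    hroot).congr_of_eventuallyEq ?_
  filter_upwards [Ioi_mem_nhds hpos] with P hP
  exact P1fun_mul_κ1fun_sq a12 a23 a34 γ2 X0 C0 P0 Pc P (by positivity [mem_Ioi.mp hP])

theorem diod_dc_shot_noise_stationary_LO_power
    (a12 a23 a34 γ2 X0 C0 : ℝ)
    (ha12 : 0 < a12) (ha23 : 0 < a23) (ha34 : 0 < a34) (hγ2 : 0 < γ2)
    (hX0 : 0 < X0) (hC0 : 0 < C0)
    (P0 Pc : ℝ) (hP0 : 0 < P0) (hPc : 0 < Pc)
    (X3 : ℝ)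
    (hX3 : X3 = X0 ^ 2 + 4 * X0 * X2fun a12 γ2 P0 + 16 * (X2fun a12 γ2 P0) ^ 2)
    (PLOstar : ℝ)
    (hPLOstar : PLOstar =
      2 * a12 * P0 * (a23 * Pc + a12 * P0)
        * (Real.sqrt X3 - X0 - 2 * X2fun a12 γ2 P0)
        / (6 * a34 * (X2fun a12 γ2 P0) ^ 2))
    (hpos : 0 < PLOstar) :
    HasDerivAt
      (fun PLO => P1fun a12 a23 a34 γ2 X0 P0 Pc PLO
        * (κ1fun a12 a23 a34 γ2 C0 P0 Pc PLO) ^ 2)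
      0 PLOstar :=
  diod_dc_shot_noise_stationary_LO_power_general a12 a23 a34 γ2 X0 C0 ha12 ha23 ha34 P0 Pc hP0 hPc
    X3 hX3 PLOstar hPLOstar hpos
end

section
/- Fix P₀ > 0 and P_LO > 0, and suppose the quantity P_c* = a₃₄P_LO(X₀ + √(X₀² + 4X₂²))/(4a₁₂a₂₃P₀) − a₁₂P₀/a₂₃ is strictly positive. Then the DIOD thermal-noise objective g(P_c) = P₁(P_c)²·κ₁(P_c)², viewed as a function of the coupling power P_c on (0, ∞), has derivative zero at P_c = P_c*; i.e., P_c* is a stationary point of P₁²κ₁². -/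
open Set

/-
Through `X₁`, which is affine in `P_c`, the objective is a constant multiple of `g(X₁)²` with
`g(x) = exp(-c/x)·(x - A)/x²`, `c = X₀a₃₄P_LO` and `A = a₃₄P_LO·X₂`; this uses
`2a₁₂P₀(a₂₃P_c + a₁₂P₀) = X₁ - A`. Differentiating,
`g'(x) = -exp(-c/x)·(x² - (c + 2A)x + cA)/x⁴`, and `X₁(P_c*) = (c + 2A + √(c² + 4A²))/2` is a root
of that quadratic.
-/

open Real

theorem hasDerivAt_exp_neg_div_mul_sub_div_sq (c A : ℝ) {x : ℝ} (hx : x ≠ 0) :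
    HasDerivAt (fun x => exp (-c / x) * (x - A) / x ^ 2)
      (-(exp (-c / x) * (x ^ 2 - (c + 2 * A) * x + c * A)) / x ^ 4) x := by
  have hexp : HasDerivAt (fun x => exp (-c / x)) (exp (-c / x) * (c / x ^ 2)) x := by
    simp only [div_eq_mul_inv]
    exact ((hasDerivAt_inv hx).const_mul (-c)).exp.congr_deriv (by ring)
  refine ((hexp.fun_mul ((hasDerivAt_id' x).sub_const A)).fun_div ((hasDerivAt_id' x).fun_pow 2)
    (pow_ne_zero 2 hx)).congr_deriv ?_
  field_simp
  ring

theorem hasDerivAt_exp_neg_div_mul_sub_div_sq_eq_zero {c A x : ℝ} (hx : x ≠ 0)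
    (hroot : x ^ 2 - (c + 2 * A) * x + c * A = 0) :
    HasDerivAt (fun x => exp (-c / x) * (x - A) / x ^ 2) 0 x := by
  simpa [hroot] using hasDerivAt_exp_neg_div_mul_sub_div_sq c A hx

theorem sq_sub_add_mul_add_eq_zero {c A s x : ℝ} (hs : s ^ 2 = c ^ 2 + 4 * A ^ 2)
    (hx : x = A + c / 2 + s / 2) :
    x ^ 2 - (c + 2 * A) * x + c * A = 0 := by
  subst hx
  linear_combination hs / 4

section Receiver

variable (a12 a23 a34 γ2 X0 C0 P0 PLO : ℝ)

theorem hasDerivAt_X1fun (Pc : ℝ) :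
    HasDerivAt (fun Pc => X1fun a12 a23 a34 γ2 P0 Pc PLO) (2 * a12 * P0 * a23) Pc := by
  refine ((((hasDerivAt_id' Pc).const_mul (2 * a12 * P0 * a23)).add_const
    (2 * a12 ^ 2 * P0 ^ 2 + 2 * a12 * P0 * (a34 * PLO) + γ2 ^ 2 * a34 * PLO)).congr_deriv
      (mul_one _)).congr_of_eventuallyEq (Filter.Eventually.of_forall fun x => ?_)
  simp only [X1fun]
  ring

theorem P1fun_mul_κ1fun (Pc : ℝ) :
    P1fun a12 a23 a34 γ2 X0 P0 Pc PLO * κ1fun a12 a23 a34 γ2 C0 P0 Pc PLO =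
      P0 * C0 * √(a34 * PLO) / 2 *
        (exp (-(X0 * a34 * PLO) / X1fun a12 a23 a34 γ2 P0 Pc PLO)
          * (X1fun a12 a23 a34 γ2 P0 Pc PLO - a34 * PLO * X2fun a12 γ2 P0)
          / X1fun a12 a23 a34 γ2 P0 Pc PLO ^ 2) := by
  have hnum : a12 * P0 * (a23 * Pc + a12 * P0) =
      (X1fun a12 a23 a34 γ2 P0 Pc PLO - a34 * PLO * X2fun a12 γ2 P0) / 2 := by
    simp only [X1fun, X2fun]
    ring
  rw [P1fun, κ1fun, mul_assoc (C0 * √(a34 * PLO)), hnum]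
  ring

theorem X1fun_stationary_eq {a12 a23 P0 : ℝ} (ha12 : a12 ≠ 0) (ha23 : a23 ≠ 0) (hP0 : P0 ≠ 0)
    (S : ℝ) :
    X1fun a12 a23 a34 γ2 P0
        (a34 * PLO * (X0 + S) / (4 * a12 * a23 * P0) - a12 * P0 / a23) PLO =
      a34 * PLO * X2fun a12 γ2 P0 + X0 * a34 * PLO / 2 + a34 * PLO * S / 2 := by
  simp only [X1fun, X2fun]
  field_simp
  ring

end Receiver

theorem diod_thermal_noise_stationary_coupling_power_general
    (a12 a23 a34 γ2 X0 C0 : ℝ)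
    (ha12 : 0 < a12) (ha23 : 0 < a23) (ha34 : 0 < a34)
    (P0 PLO : ℝ) (hP0 : 0 < P0) (hPLO : 0 < PLO)
    (Pcstar : ℝ)
    (hPcstar : Pcstar =
      a34 * PLO * (X0 + Real.sqrt (X0 ^ 2 + 4 * (X2fun a12 γ2 P0) ^ 2))
        / (4 * a12 * a23 * P0) - a12 * P0 / a23)
    (hpos : 0 < Pcstar) :
    HasDerivAt
      (fun Pc => (P1fun a12 a23 a34 γ2 X0 P0 Pc PLO) ^ 2
        * (κ1fun a12 a23 a34 γ2 C0 P0 Pc PLO) ^ 2)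
      0 Pcstar := by
  set S := √(X0 ^ 2 + 4 * X2fun a12 γ2 P0 ^ 2)
  have hS : (a34 * PLO * S) ^ 2 =
      (X0 * a34 * PLO) ^ 2 + 4 * (a34 * PLO * X2fun a12 γ2 P0) ^ 2 := by
    rw [mul_pow, Real.sq_sqrt (by positivity)]
    ring
  have hX1_pos : 0 < X1fun a12 a23 a34 γ2 P0 Pcstar PLO := by
    unfold X1fun
    positivity
  have hroot := sq_sub_add_mul_add_eq_zero hS
    (hPcstar ▸ X1fun_stationary_eq a34 γ2 X0 PLO ha12.ne' ha23.ne' hP0.ne' S)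
  have hP1κ1 : HasDerivAt
      (fun Pc => P1fun a12 a23 a34 γ2 X0 P0 Pc PLO * κ1fun a12 a23 a34 γ2 C0 P0 Pc PLO)
      0 Pcstar := by
    simp only [P1fun_mul_κ1fun]
    simpa using ((hasDerivAt_exp_neg_div_mul_sub_div_sq_eq_zero hX1_pos.ne' hroot).comp Pcstar
      (hasDerivAt_X1fun a12 a23 a34 γ2 P0 PLO Pcstar)).const_mul (P0 * C0 * √(a34 * PLO) / 2)
  simpa [mul_pow] using hP1κ1.fun_pow 2

theorem diod_thermal_noise_stationary_coupling_power
    (a12 a23 a34 γ2 X0 C0 : ℝ)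
    (ha12 : 0 < a12) (ha23 : 0 < a23) (ha34 : 0 < a34) (hγ2 : 0 < γ2)
    (hX0 : 0 < X0) (hC0 : 0 < C0)
    (P0 PLO : ℝ) (hP0 : 0 < P0) (hPLO : 0 < PLO)
    (Pcstar : ℝ)
    (hPcstar : Pcstar =
      a34 * PLO * (X0 + Real.sqrt (X0 ^ 2 + 4 * (X2fun a12 γ2 P0) ^ 2))
        / (4 * a12 * a23 * P0) - a12 * P0 / a23)
    (hpos : 0 < Pcstar) :
    HasDerivAt
      (fun Pc => (P1fun a12 a23 a34 γ2 X0 P0 Pc PLO) ^ 2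
        * (κ1fun a12 a23 a34 γ2 C0 P0 Pc PLO) ^ 2)
      0 Pcstar :=
  diod_thermal_noise_stationary_coupling_power_general a12 a23 a34 γ2 X0 C0 ha12 ha23 ha34 P0 PLO
    hP0 hPLO Pcstar hPcstar hpos
end

section
/- Fix K ≥ 1, k ∈ {1,…,K}, strictly positive reals ρ, ρ_SN, ς², σ², Φ², Φ_SN², β_1, …, β_K, and per-user energies E_1, …, E_K > 0. For each natural number M ≥ 1 set the transmit powers p_{k'}(M) = E_{k'}/M and define SINR_k^MRC(M) = M·ρ·p_k(M)·Φ²·β_k / ( Σ_{k'=1}^K p_{k'}(M)·β_{k'}·(ρ·Φ² + ς²·ρ_SN·Φ_SN²) + ς²·ρ_SN·p_k(M)·Φ_SN²·β_k + σ² ). Then SINR_k^MRC(M) → ρ·Φ²·E_k·β_k/σ² as M → ∞; in particular, the MRC achievable-rate lower bound log₂(1 + SINR_k^MRC(M)) converges to the strictly positive limit log₂(1 + ρ·Φ²·E_k·β_k/σ²), i.e., the power-scaling law of massive MIMO holds for RAQ-MIMO under MRC. -/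
/-! With `p_k' = E_k' / M` the array gain `M` in the numerator cancels the power scaling exactly, so
the useful signal stays at `ρ Φ² E_k β_k`, while every interference and shot-noise term in the
denominator carries a factor `1 / M` and vanishes, leaving only the additive noise `σ²`. -/

open Finset Filter

/-- MRC SINR lower bound of Theorem 1 with per-user powers `p k' = E k' / M`. -/
noncomputable def sinrMRC (K : ℕ) (ρ ρSN ς2 σ2 Φ2 ΦSN2 : ℝ)
    (β E : Fin K → ℝ) (k : Fin K) (M : ℕ) : ℝ :=
  (M : ℝ) * ρ * (E k / (M : ℝ)) * Φ2 * β k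
    / ((∑ k', (E k' / (M : ℝ)) * β k' * (ρ * Φ2 + ς2 * ρSN * ΦSN2))
      + ς2 * ρSN * (E k / (M : ℝ)) * ΦSN2 * β k + σ2)

open Topology

theorem tendsto_const_div_natCast_add_nhds (c d : ℝ) :
    Tendsto (fun M : ℕ => c / M + d) atTop (𝓝 d) := by
  simpa using (tendsto_const_div_atTop_nhds_zero_nat c).add_const d

theorem sinrMRC_eq_div {K : ℕ} (ρ ρSN ς2 σ2 Φ2 ΦSN2 : ℝ) (β E : Fin K → ℝ) (k : Fin K)
    {M : ℕ} (hM : M ≠ 0) :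
    sinrMRC K ρ ρSN ς2 σ2 Φ2 ΦSN2 β E k M =
      ρ * Φ2 * E k * β k
        / ((∑ k', E k' * β k' * (ρ * Φ2 + ς2 * ρSN * ΦSN2) + ς2 * ρSN * E k * ΦSN2 * β k) / M
          + σ2) := by
  have hM' : (M : ℝ) ≠ 0 := Nat.cast_ne_zero.mpr hM
  simp only [sinrMRC, add_div, sum_div]
  congr 1
  · field_simp
  · congr 2
    · exact sum_congr rfl fun _ _ => by ring
    · ring

theorem tendsto_sinrMRC {K : ℕ} (k : Fin K) (ρ ρSN ς2 σ2 Φ2 ΦSN2 : ℝ) (hσ2 : σ2 ≠ 0)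
    (β E : Fin K → ℝ) :
    Tendsto (fun M : ℕ => sinrMRC K ρ ρSN ς2 σ2 Φ2 ΦSN2 β E k M) atTop
      (𝓝 (ρ * Φ2 * E k * β k / σ2)) := by
  have hdenom := tendsto_const_div_natCast_add_nhds
    (∑ k', E k' * β k' * (ρ * Φ2 + ς2 * ρSN * ΦSN2) + ς2 * ρSN * E k * ΦSN2 * β k) σ2
  refine (tendsto_const_nhds.div hdenom hσ2).congr' ?_
  filter_upwards [eventually_ne_atTop 0] with M hM
  exact (sinrMRC_eq_div ρ ρSN ς2 σ2 Φ2 ΦSN2 β E k hM).symm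

theorem power_scaling_law_mrc_general
    (K : ℕ) (k : Fin K)
    (ρ ρSN ς2 σ2 Φ2 ΦSN2 : ℝ)
    (hρ : 0 < ρ)
    (hσ2 : 0 < σ2) (hΦ2 : 0 < Φ2)
    (β E : Fin K → ℝ) (hβ : ∀ k', 0 < β k') (hE : ∀ k', 0 < E k') :
    Tendsto (fun M : ℕ => sinrMRC K ρ ρSN ς2 σ2 Φ2 ΦSN2 β E k M) atTop
      (nhds (ρ * Φ2 * E k * β k / σ2)) ∧
    Tendsto
      (fun M : ℕ => Real.logb 2 (1 + sinrMRC K ρ ρSN ς2 σ2 Φ2 ΦSN2 β E k M))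
      atTop (nhds (Real.logb 2 (1 + ρ * Φ2 * E k * β k / σ2))) ∧
    0 < Real.logb 2 (1 + ρ * Φ2 * E k * β k / σ2) := by
  have hlim := tendsto_sinrMRC k ρ ρSN ς2 σ2 Φ2 ΦSN2 hσ2.ne' β E
  have hsnr : 0 < ρ * Φ2 * E k * β k / σ2 := by
    have := hE k
    have := hβ k
    positivity
  exact ⟨hlim, (tendsto_const_nhds.add hlim).logb (by positivity),
    Real.logb_pos one_lt_two (lt_add_of_pos_right 1 hsnr)⟩

theorem power_scaling_law_mrc
    (K : ℕ) (hK : 1 ≤ K) (k : Fin K)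
    (ρ ρSN ς2 σ2 Φ2 ΦSN2 : ℝ)
    (hρ : 0 < ρ) (hρSN : 0 < ρSN) (hς2 : 0 < ς2)
    (hσ2 : 0 < σ2) (hΦ2 : 0 < Φ2) (hΦSN2 : 0 < ΦSN2)
    (β E : Fin K → ℝ) (hβ : ∀ k', 0 < β k') (hE : ∀ k', 0 < E k') :
    Tendsto (fun M : ℕ => sinrMRC K ρ ρSN ς2 σ2 Φ2 ΦSN2 β E k M) atTop
      (nhds (ρ * Φ2 * E k * β k / σ2)) ∧
    Tendsto
      (fun M : ℕ => Real.logb 2 (1 + sinrMRC K ρ ρSN ς2 σ2 Φ2 ΦSN2 β E k M))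
      atTop (nhds (Real.logb 2 (1 + ρ * Φ2 * E k * β k / σ2))) ∧
    0 < Real.logb 2 (1 + ρ * Φ2 * E k * β k / σ2) :=
  power_scaling_law_mrc_general K k ρ ρSN ς2 σ2 Φ2 ΦSN2 hρ hσ2 hΦ2 β E hβ hE
end

section
/- Fix K ≥ 1, k ∈ {1,…,K}, strictly positive reals ρ, ρ_SN, ς², σ², Φ², Φ_SN², β_1, …, β_K, and per-user energies E_1, …, E_K > 0. For each natural number M > K set the transmit powers p_{k'}(M) = E_{k'}/M and define SINR_k^ZF(M) = (M−K)·ρ·p_k(M)·Φ²·β_k / ( (ς²·ρ_SN·Φ_SN²/M)·( p_k(M)·β_k·(M−K) + Σ_{k'=1}^K p_{k'}(M)·β_{k'}·(M−1) ) + σ² ). Then SINR_k^ZF(M) → ρ·Φ²·E_k·β_k/σ² as M → ∞; in particular, the ZF achievable-rate lower bound log₂(1 + SINR_k^ZF(M)) converges to the same strictly positive limit log₂(1 + ρ·Φ²·E_k·β_k/σ²) as MRC, i.e., the power-scaling law of massive MIMO holds for RAQ-MIMO under ZF and the MRC and ZF asymptotic rates coincide. -/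
open Finset Filter

/-- ZF SINR lower bound of Theorem 2 with per-user powers `p k' = E k' / M`. -/
noncomputable def sinrZF (K : ℕ) (ρ ρSN ς2 σ2 Φ2 ΦSN2 : ℝ)
    (β E : Fin K → ℝ) (k : Fin K) (M : ℕ) : ℝ :=
  ((M : ℝ) - (K : ℝ)) * ρ * (E k / (M : ℝ)) * Φ2 * β k
    / ((ς2 * ρSN * ΦSN2 / (M : ℝ))
        * ((E k / (M : ℝ)) * β k * ((M : ℝ) - (K : ℝ))
          + ∑ k', (E k' / (M : ℝ)) * β k' * ((M : ℝ) - 1))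
      + σ2)

theorem power_scaling_law_zf
    (K : ℕ) (hK : 1 ≤ K) (k : Fin K)
    (ρ ρSN ς2 σ2 Φ2 ΦSN2 : ℝ)
    (hρ : 0 < ρ) (hρSN : 0 < ρSN) (hς2 : 0 < ς2)
    (hσ2 : 0 < σ2) (hΦ2 : 0 < Φ2) (hΦSN2 : 0 < ΦSN2)
    (β E : Fin K → ℝ) (hβ : ∀ k', 0 < β k') (hE : ∀ k', 0 < E k') :
    Tendsto (fun M : ℕ => sinrZF K ρ ρSN ς2 σ2 Φ2 ΦSN2 β E k M) atTop
      (nhds (ρ * Φ2 * E k * β k / σ2)) ∧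
    Tendsto
      (fun M : ℕ => Real.logb 2 (1 + sinrZF K ρ ρSN ς2 σ2 Φ2 ΦSN2 β E k M))
      atTop (nhds (Real.logb 2 (1 + ρ * Φ2 * E k * β k / σ2))) ∧
    0 < Real.logb 2 (1 + ρ * Φ2 * E k * β k / σ2) := by
  have hinv : Tendsto (fun M : ℕ => ((M : ℝ))⁻¹) atTop (nhds 0) :=
    tendsto_inv_atTop_zero.comp tendsto_natCast_atTop_atTop
  have hg : ∀ a : ℝ, Tendsto (fun M : ℕ => ((M : ℝ) - a) / (M : ℝ)) atTop (nhds 1) := by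
    intro a
    have h1 : Tendsto (fun M : ℕ => 1 - a * ((M : ℝ))⁻¹) atTop (nhds 1) := by
      have := (tendsto_const_nhds (x := (1:ℝ))).sub ((tendsto_const_nhds (x := a)).mul hinv)
      simpa using this
    apply h1.congr'
    filter_upwards [eventually_ge_atTop 1] with M hM
    have hM0 : (M : ℝ) ≠ 0 := by positivity
    field_simp
  set S : ℝ := ∑ k', E k' * β k' with hS
  set c : ℝ := ς2 * ρSN * ΦSN2 with hc
  set L : ℝ := ρ * Φ2 * E k * β k with hL
  -- pointwise rewriting
  have hrw : ∀ M : ℕ, sinrZF K ρ ρSN ς2 σ2 Φ2 ΦSN2 β E k M =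
      (L * (((M : ℝ) - K) / M)) /
      (c * ((M : ℝ))⁻¹ * (E k * β k * (((M : ℝ) - K) / M) + S * (((M : ℝ) - 1) / M)) + σ2) := by
    intro M
    have hsum : (∑ k', (E k' / (M : ℝ)) * β k' * ((M : ℝ) - 1))
        = S * (((M : ℝ) - 1) / (M : ℝ)) := by
      rw [hS, Finset.sum_mul]
      apply Finset.sum_congr rfl
      intros; ring
    simp only [sinrZF, hsum]
    rw [hL, hc]
    ring_nf
  have hnum : Tendsto (fun M : ℕ => L * (((M : ℝ) - K) / M)) atTop (nhds L) := by
    have := (tendsto_const_nhds (x := L)).mul (hg K)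
    simpa using this
  have hden : Tendsto (fun M : ℕ =>
      c * ((M : ℝ))⁻¹ * (E k * β k * (((M : ℝ) - K) / M) + S * (((M : ℝ) - 1) / M)) + σ2)
      atTop (nhds σ2) := by
    have h1 : Tendsto (fun M : ℕ => c * ((M : ℝ))⁻¹) atTop (nhds 0) := by
      have := (tendsto_const_nhds (x := c)).mul hinv
      simpa using this
    have h2 : Tendsto (fun M : ℕ =>
        E k * β k * (((M : ℝ) - K) / M) + S * (((M : ℝ) - 1) / M)) atTop
        (nhds (E k * β k * 1 + S * 1)) :=
      ((tendsto_const_nhds.mul (hg K)).add (tendsto_const_nhds.mul (hg 1)))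
    have := (h1.mul h2).add (tendsto_const_nhds (x := σ2))
    simpa using this
  have hmain : Tendsto (fun M : ℕ => sinrZF K ρ ρSN ς2 σ2 Φ2 ΦSN2 β E k M) atTop
      (nhds (L / σ2)) := by
    have := hnum.div hden hσ2.ne'
    exact this.congr fun M => (hrw M).symm
  have hLpos : 0 < L := by
    have := hE k; have := hβ k; positivity
  have hL1 : (0:ℝ) < 1 + L / σ2 := by positivity
  refine ⟨hmain, ?_, ?_⟩
  · exact (Real.continuousAt_logb (x := 1 + L / σ2) (by positivity)).tendsto.comp
      ((tendsto_const_nhds (x := (1:ℝ))).add hmain)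
  · exact Real.logb_pos (by norm_num) (by linarith [div_pos hLpos hσ2])
end
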